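/- For μ > 0, ∫_{ℝ²} e^{ω_μ(z)} ω_μ(z)² dz = 8π(4 log²μ − 4(log 8 − 2) log μ + log²8 − 4 log 8 + 8). -/

import Mathlib

/-!
On the bubble `e^{ω_μ} = 8μ²/(μ² + |z|²)²` one has `ω_μ = log (8μ²) - 2 log (μ² + |z|²)`,
so the integrand is radial. In polar coordinates the radial integral
`∫₀^∞ r (A - 2 log (c + r²))² / (c + r²)² dr` has the explicit antiderivative
`-P(A - 2 log (c + r²)) / (2 (c + r²))` with `P(w) = w² - 4w + 8`, which vanishes at infinity
because polynomials in `log u` are `o(u)`.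
-/

open MeasureTheory Real

/-- `ω_μ(z) = log(8μ²/(μ² + |z|²)²)`. -/
noncomputable def omega (μ : ℝ) (z : ℝ × ℝ) : ℝ :=
  Real.log (8 * μ ^ 2 / (μ ^ 2 + (z.1 ^ 2 + z.2 ^ 2)) ^ 2)

open Set Filter Topology Polynomial

theorem integral_comp_sq_add_sq {E : Type*} [NormedAddCommGroup E] [NormedSpace ℝ E]
    (g : ℝ → E) :
    ∫ z : ℝ × ℝ, g (z.1 ^ 2 + z.2 ^ 2)
      = (2 * π) • ∫ r in Ioi (0 : ℝ), r • g (r ^ 2) := by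
  rw [← integral_comp_polarCoord_symm]
  have h_radial : ∀ p : ℝ × ℝ,
      (polarCoord.symm p).1 ^ 2 + (polarCoord.symm p).2 ^ 2 = p.1 ^ 2 := fun p => by
    rw [polarCoord_symm_apply, mul_pow, mul_pow, ← mul_add, cos_sq_add_sin_sq, mul_one]
  simp only [h_radial]
  rw [polarCoord_target, Measure.volume_eq_prod, ← Measure.prod_restrict,
    integral_fun_fst (f := fun r : ℝ => r • g (r ^ 2)), measureReal_restrict_apply_univ,
    volume_real_Ioo_of_le (by linarith [pi_pos]), sub_neg_eq_add, two_mul]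

theorem tendsto_eval_log_div_atTop (p : ℝ[X]) :
    Tendsto (fun u => p.eval (log u) / u) atTop (𝓝 0) := by
  induction p using Polynomial.induction_on' with
  | add p q hp hq => simpa [add_div] using hp.add hq
  | monomial n a =>
    have h := (tendsto_pow_log_div_mul_add_atTop 1 0 n one_ne_zero).const_mul a
    simpa [mul_div_assoc] using h

noncomputable def radialAntideriv (c A r : ℝ) : ℝ :=
  -((A - 2 * log (c + r ^ 2)) ^ 2 - 4 * (A - 2 * log (c + r ^ 2)) + 8) / (2 * (c + r ^ 2))

section Radial

variable {c : ℝ} (A : ℝ)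

theorem hasDerivAt_radialAntideriv (hc : 0 < c) (r : ℝ) :
    HasDerivAt (radialAntideriv c A) (r * ((A - 2 * log (c + r ^ 2)) ^ 2 / (c + r ^ 2) ^ 2)) r := by
  have hu : 0 < c + r ^ 2 := by positivity
  have h_sum : HasDerivAt (fun r : ℝ => c + r ^ 2) (2 * r) r := by
    simpa using (hasDerivAt_pow 2 r).const_add c
  have h_w : HasDerivAt (fun r : ℝ => A - 2 * log (c + r ^ 2)) (-(2 * (2 * r / (c + r ^ 2)))) r :=
    ((h_sum.log hu.ne').const_mul 2).const_sub A
  have h_poly : HasDerivAt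
      (fun r : ℝ => -((A - 2 * log (c + r ^ 2)) ^ 2 - 4 * (A - 2 * log (c + r ^ 2)) + 8))
      (-((2 : ℕ) * (A - 2 * log (c + r ^ 2)) ^ 1 * -(2 * (2 * r / (c + r ^ 2)))
        - 4 * -(2 * (2 * r / (c + r ^ 2))))) r :=
    (((h_w.pow 2).sub (h_w.const_mul 4)).add_const 8).neg
  refine (h_poly.div (h_sum.const_mul 2) (by positivity)).congr_deriv ?_
  field_simp
  ring

theorem tendsto_radialAntideriv_atTop :
    Tendsto (radialAntideriv c A) atTop (𝓝 0) := by
  have h_sum : Tendsto (fun r : ℝ => c + r ^ 2) atTop atTop :=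
    tendsto_atTop_add_const_left _ _ (tendsto_pow_atTop two_ne_zero)
  have h_log := (tendsto_eval_log_div_atTop
    ((C A - 2 * X) ^ 2 - 4 * (C A - 2 * X) + 8)).const_mul (-(1 / 2 : ℝ))
  rw [mul_zero] at h_log
  refine (h_log.comp h_sum).congr fun r => ?_
  simp only [radialAntideriv, Function.comp_apply, eval_add, eval_sub, eval_pow, eval_mul,
    eval_C, eval_X, eval_ofNat, div_eq_mul_inv, mul_inv]
  ring

theorem integral_Ioi_mul_sq_sub_log_div_sq (hc : 0 < c) :
    ∫ r in Ioi (0 : ℝ), r * ((A - 2 * log (c + r ^ 2)) ^ 2 / (c + r ^ 2) ^ 2)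
      = ((A - 2 * log c) ^ 2 - 4 * (A - 2 * log c) + 8) / (2 * c) := by
  rw [integral_Ioi_of_hasDerivAt_of_nonneg
    (hasDerivAt_radialAntideriv A hc 0).continuousAt.continuousWithinAt
    (fun r _ => hasDerivAt_radialAntideriv A hc r)
    (fun r hr => mul_nonneg hr.le (by positivity))
    (tendsto_radialAntideriv_atTop A)]
  rw [radialAntideriv, zero_pow two_ne_zero, add_zero]
  ring

end Radial

theorem exp_omega_mul_omega_sq {μ : ℝ} (hμ : μ ≠ 0) (z : ℝ × ℝ) :
    exp (omega μ z) * omega μ z ^ 2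
      = 8 * μ ^ 2 * ((log (8 * μ ^ 2) - 2 * log (μ ^ 2 + (z.1 ^ 2 + z.2 ^ 2))) ^ 2
        / (μ ^ 2 + (z.1 ^ 2 + z.2 ^ 2)) ^ 2) := by
  have hu : 0 < μ ^ 2 + (z.1 ^ 2 + z.2 ^ 2) := by positivity
  have h_log : omega μ z = log (8 * μ ^ 2) - 2 * log (μ ^ 2 + (z.1 ^ 2 + z.2 ^ 2)) := by
    rw [omega, log_div (by positivity) (by positivity), log_pow, Nat.cast_ofNat]
  have h_exp : exp (omega μ z) = 8 * μ ^ 2 / (μ ^ 2 + (z.1 ^ 2 + z.2 ^ 2)) ^ 2 :=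
    exp_log (by positivity)
  rw [h_exp, h_log]
  ring

theorem stmt5 (μ : ℝ) (hμ : 0 < μ) :
    (∫ z : ℝ × ℝ, Real.exp (omega μ z) * omega μ z ^ 2)
      = 8 * π * (4 * Real.log μ ^ 2 - 4 * (Real.log 8 - 2) * Real.log μ
          + Real.log 8 ^ 2 - 4 * Real.log 8 + 8) := by
  have hμ2 : 0 < μ ^ 2 := by positivity
  simp_rw [exp_omega_mul_omega_sq hμ.ne']
  rw [integral_const_mul, integral_comp_sq_add_sq
    fun s => (log (8 * μ ^ 2) - 2 * log (μ ^ 2 + s)) ^ 2 / (μ ^ 2 + s) ^ 2]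
  simp only [smul_eq_mul]
  rw [integral_Ioi_mul_sq_sub_log_div_sq _ hμ2, log_mul (by norm_num) hμ2.ne', log_pow,
    Nat.cast_ofNat]
  field_simp
  ring
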